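/- arXiv:1001.2153 — 8 statements merged into one kernel-verified Lean document; each statement's English description precedes it below -/
import Mathlib

section
/- The Casimir element C = EF + λ²(q⁻¹μK² + qνK⁻²) lies in the center of U_q(μ,ν); in particular CE = EC, CF = FC, and CK = KC. -/
/-!
Moving `E` or `F` past `K²` and `K⁻²` produces factors `q^{±2}`; together with the relation for
`[E, F]` this makes `[C, E]` and `[C, F]` multiples of `λ(q - q⁻¹) - 1`. The element `EF` commutes
with `K` because the factors `q` and `q⁻¹` picked up by `E` and `F` cancel. Since `C` commutes with
all generators, it commutes with the algebra they generate.
-/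

section

variable {k A : Type*} [Field k] [Ring A] [Algebra k A]

theorem ne_zero_of_mul_sub_inv_eq_one {q lam : k} (h : lam * (q - q⁻¹) = 1) : q ≠ 0 := by
  rintro rfl
  simp at h

theorem inv_mul_eq_inv_smul_mul_inv {c : k} (hc : c ≠ 0) {K Kinv X : A}
    (hKinvK : Kinv * K = 1) (hKKinv : K * Kinv = 1) (h : K * X = c • (X * K)) :
    Kinv * X = c⁻¹ • (X * Kinv) := by
  have : X * Kinv = c • (Kinv * X) :=
    calc X * Kinv = Kinv * (K * X) * Kinv := by rw [← mul_assoc, hKinvK, one_mul]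
      _ = c • (Kinv * X) := by
        rw [h, mul_smul_comm, smul_mul_assoc, mul_assoc, mul_assoc, hKKinv, mul_one]
  rw [this, smul_smul, inv_mul_cancel₀ hc, one_smul]

theorem mul_self_mul_eq_sq_smul {c : k} {K X : A} (h : K * X = c • (X * K)) :
    K * K * X = c ^ 2 • (X * (K * K)) := by
  rw [mul_assoc, h, mul_smul_comm, ← mul_assoc, h, smul_mul_assoc, smul_smul, sq, mul_assoc]

structure UqRelations (q lam μ ν : k) (K Kinv E F : A) : Prop where
  kinv_mul_k : Kinv * K = 1
  k_mul_kinv : K * Kinv = 1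
  k_mul_e : K * E = q • (E * K)
  k_mul_f : K * F = q⁻¹ • (F * K)
  e_mul_f_sub_f_mul_e : E * F - F * E = lam • (μ • (K * K) - ν • (Kinv * Kinv))

def casimir (q lam μ ν : k) (K Kinv E F : A) : A :=
  E * F + (lam ^ 2 * q⁻¹ * μ) • (K * K) + (lam ^ 2 * q * ν) • (Kinv * Kinv)

namespace UqRelations

variable {q lam μ ν : k} {K Kinv E F : A}

theorem kinv_mul_e (h : UqRelations q lam μ ν K Kinv E F) (hq : q ≠ 0) :
    Kinv * E = q⁻¹ • (E * Kinv) :=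
  inv_mul_eq_inv_smul_mul_inv hq h.kinv_mul_k h.k_mul_kinv h.k_mul_e

theorem kinv_mul_f (h : UqRelations q lam μ ν K Kinv E F) (hq : q ≠ 0) :
    Kinv * F = q • (F * Kinv) := by
  simpa using inv_mul_eq_inv_smul_mul_inv (inv_ne_zero hq) h.kinv_mul_k h.k_mul_kinv h.k_mul_f

theorem f_mul_e (h : UqRelations q lam μ ν K Kinv E F) :
    F * E = E * F - lam • (μ • (K * K) - ν • (Kinv * Kinv)) := by
  rw [← h.e_mul_f_sub_f_mul_e, sub_sub_cancel]

theorem commute_k_e_mul_f (h : UqRelations q lam μ ν K Kinv E F) (hq : q ≠ 0) :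
    Commute K (E * F) := by
  rw [Commute, SemiconjBy, ← mul_assoc, h.k_mul_e, smul_mul_assoc, mul_assoc, h.k_mul_f,
    mul_smul_comm, smul_smul, mul_inv_cancel₀ hq, one_smul, mul_assoc]

theorem commute_casimir_k (h : UqRelations q lam μ ν K Kinv E F) (hq : q ≠ 0) :
    Commute (casimir q lam μ ν K Kinv E F) K := by
  have hKK : Commute K (K * K) := (Commute.refl K).mul_right (Commute.refl K)
  have hKKinv : Commute K Kinv := h.k_mul_kinv.trans h.kinv_mul_k.symm
  exact (((h.commute_k_e_mul_f hq).add_right (hKK.smul_right _)).add_right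
    ((hKKinv.mul_right hKKinv).smul_right _)).symm

theorem commute_casimir_e (h : UqRelations q lam μ ν K Kinv E F) (hlam : lam * (q - q⁻¹) = 1) :
    Commute (casimir q lam μ ν K Kinv E F) E := by
  have hKKE := mul_self_mul_eq_sq_smul h.k_mul_e
  have hq := ne_zero_of_mul_sub_inv_eq_one hlam
  have hKinvKinvE := mul_self_mul_eq_sq_smul (h.kinv_mul_e hq)
  simp only [Commute, SemiconjBy, casimir, add_mul, mul_add, smul_mul_assoc, mul_smul_comm,
    hKKE, hKinvKinvE, mul_assoc, h.f_mul_e, mul_sub, smul_sub, smul_smul]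
  match_scalars
  · rfl
  · field_simp at hlam ⊢
    linear_combination (lam * μ) * hlam
  · field_simp at hlam ⊢
    linear_combination (-(lam * ν)) * hlam

theorem commute_casimir_f (h : UqRelations q lam μ ν K Kinv E F) (hlam : lam * (q - q⁻¹) = 1) :
    Commute (casimir q lam μ ν K Kinv E F) F := by
  have hKKF := mul_self_mul_eq_sq_smul h.k_mul_f
  have hq := ne_zero_of_mul_sub_inv_eq_one hlam
  have hKinvKinvF := mul_self_mul_eq_sq_smul (h.kinv_mul_f hq)
  simp only [Commute, SemiconjBy, casimir, add_mul, mul_add, smul_mul_assoc, mul_smul_comm,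
    hKKF, hKinvKinvF, ← mul_assoc, h.f_mul_e, sub_mul, smul_sub, smul_smul]
  match_scalars
  · rfl
  · field_simp at hlam ⊢
    linear_combination (-(lam * μ)) * hlam
  · field_simp at hlam ⊢
    linear_combination (lam * ν) * hlam

theorem commute_casimir_of_mem_adjoin (h : UqRelations q lam μ ν K Kinv E F)
    (hlam : lam * (q - q⁻¹) = 1) {x : A} (hx : x ∈ Algebra.adjoin k {K, Kinv, E, F}) :
    Commute (casimir q lam μ ν K Kinv E F) x := by
  have hCK := h.commute_casimir_k (ne_zero_of_mul_sub_inv_eq_one hlam)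
  have hCKinv : Commute (casimir q lam μ ν K Kinv E F) Kinv :=
    hCK.units_inv_right (u := ⟨K, Kinv, h.k_mul_kinv, h.kinv_mul_k⟩)
  refine Algebra.commute_of_mem_adjoin_of_forall_mem_commute hx ?_
  rintro y (rfl | rfl | rfl | rfl)
  exacts [hCK, hCKinv, h.commute_casimir_e hlam, h.commute_casimir_f hlam]

end UqRelations

end

/-- The Casimir element C = EF + λ²(q⁻¹μK² + qνK⁻²) lies in the center of
U_q(μ,ν) (formalized: in any unital ℂ-algebra with elements K, K⁻¹, E, F satisfying the
defining relations, C commutes with every element of the subalgebra they generate;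
in particular CE = EC, CF = FC and CK = KC). -/
theorem casimir_central
    {A : Type*} [Ring A] [Algebra ℂ A]
    (q μ ν : ℝ) (hq0 : 0 < q) (hq1 : q < 1)
    (lam : ℝ) (hlam : lam = (q - q⁻¹)⁻¹)
    (K Kinv E F : A)
    (hKinvK : Kinv * K = 1) (hKKinv : K * Kinv = 1)
    (hKE : K * E = (q : ℂ) • (E * K))
    (hKF : K * F = ((q⁻¹ : ℝ) : ℂ) • (F * K))
    (hEF : E * F - F * E =
      (lam : ℂ) • ((μ : ℂ) • (K * K) - (ν : ℂ) • (Kinv * Kinv)))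
    (C : A)
    (hC : C = E * F + ((lam ^ 2 * q⁻¹ * μ : ℝ) : ℂ) • (K * K)
                    + ((lam ^ 2 * q * ν : ℝ) : ℂ) • (Kinv * Kinv)) :
    (∀ x ∈ Algebra.adjoin ℂ ({K, Kinv, E, F} : Set A), C * x = x * C) ∧
    C * E = E * C ∧ C * F = F * C ∧ C * K = K * C := by
  have hrel : UqRelations (q : ℂ) lam μ ν K Kinv E F :=
    ⟨hKinvK, hKKinv, hKE, by exact_mod_cast hKF, hEF⟩
  have hq : q - q⁻¹ ≠ 0 := by
    have : 1 < q⁻¹ := (one_lt_inv₀ hq0).mpr hq1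
    linarith
  have hlamC : (lam : ℂ) * (q - (q : ℂ)⁻¹) = 1 := by
    exact_mod_cast hlam ▸ inv_mul_cancel₀ hq
  have hCasimir : C = casimir (q : ℂ) lam μ ν K Kinv E F := by
    rw [hC, casimir]
    push_cast
    rfl
  subst hCasimir
  have hcomm (x : A) (hx : x ∈ Algebra.adjoin ℂ ({K, Kinv, E, F} : Set A)) :=
    hrel.commute_casimir_of_mem_adjoin hlamC hx
  exact ⟨hcomm, hcomm E (Algebra.subset_adjoin (by simp)),
    hcomm F (Algebra.subset_adjoin (by simp)), hcomm K (Algebra.subset_adjoin (by simp))⟩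
end

section
/- For any real μ, ν, υ, there is a unique unital algebra homomorphism Δ : U_q(μ,ν) → U_q(μ,υ) ⊗ U_q(υ,ν) with Δ(E) = E⊗K + K⁻¹⊗E, Δ(F) = F⊗K + K⁻¹⊗F, Δ(K) = K⊗K, and Δ(K⁻¹) = K⁻¹⊗K⁻¹; i.e. these assignments preserve all defining relations, including [Δ(E),Δ(F)] = λ(μΔ(K)² − νΔ(K⁻¹)²). -/
open scoped TensorProduct

/-- Generators of the algebra U_q(μ,ν). -/
inductive UqGen : Type
  | K | Kinv | E | F

/-- λ = (q − q⁻¹)⁻¹. -/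
noncomputable def lamq (q : ℝ) : ℝ := (q - q⁻¹)⁻¹

/-- The defining relations of U_q(μ,ν): K⁻¹K = 1 = KK⁻¹, KE = qEK, KF = q⁻¹FK,
EF − FE = λ(μK² − νK⁻²). -/
inductive UqRel (q μ ν : ℝ) : FreeAlgebra ℂ UqGen → FreeAlgebra ℂ UqGen → Prop
  | inv_left : UqRel q μ ν (FreeAlgebra.ι ℂ UqGen.Kinv * FreeAlgebra.ι ℂ UqGen.K) 1
  | inv_right : UqRel q μ ν (FreeAlgebra.ι ℂ UqGen.K * FreeAlgebra.ι ℂ UqGen.Kinv) 1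
  | KE : UqRel q μ ν (FreeAlgebra.ι ℂ UqGen.K * FreeAlgebra.ι ℂ UqGen.E)
      ((q : ℂ) • (FreeAlgebra.ι ℂ UqGen.E * FreeAlgebra.ι ℂ UqGen.K))
  | KF : UqRel q μ ν (FreeAlgebra.ι ℂ UqGen.K * FreeAlgebra.ι ℂ UqGen.F)
      (((q⁻¹ : ℝ) : ℂ) • (FreeAlgebra.ι ℂ UqGen.F * FreeAlgebra.ι ℂ UqGen.K))
  | EF : UqRel q μ ν
      (FreeAlgebra.ι ℂ UqGen.E * FreeAlgebra.ι ℂ UqGen.F -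
        FreeAlgebra.ι ℂ UqGen.F * FreeAlgebra.ι ℂ UqGen.E)
      ((lamq q : ℂ) • ((μ : ℂ) • (FreeAlgebra.ι ℂ UqGen.K * FreeAlgebra.ι ℂ UqGen.K) -
        (ν : ℂ) • (FreeAlgebra.ι ℂ UqGen.Kinv * FreeAlgebra.ι ℂ UqGen.Kinv)))

/-- The universal unital ℂ-algebra U_q(μ,ν). -/
noncomputable def Uq (q μ ν : ℝ) : Type := RingQuot (UqRel q μ ν)

noncomputable instance (q μ ν : ℝ) : Ring (Uq q μ ν) :=
  inferInstanceAs (Ring (RingQuot (UqRel q μ ν)))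

noncomputable instance (q μ ν : ℝ) : Algebra ℂ (Uq q μ ν) :=
  inferInstanceAs (Algebra ℂ (RingQuot (UqRel q μ ν)))

/-- The generator K of U_q(μ,ν). -/
noncomputable def UqK (q μ ν : ℝ) : Uq q μ ν :=
  RingQuot.mkAlgHom ℂ (UqRel q μ ν) (FreeAlgebra.ι ℂ UqGen.K)

/-- The generator K⁻¹ of U_q(μ,ν). -/
noncomputable def UqKinv (q μ ν : ℝ) : Uq q μ ν :=
  RingQuot.mkAlgHom ℂ (UqRel q μ ν) (FreeAlgebra.ι ℂ UqGen.Kinv)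

/-- The generator E of U_q(μ,ν). -/
noncomputable def UqE (q μ ν : ℝ) : Uq q μ ν :=
  RingQuot.mkAlgHom ℂ (UqRel q μ ν) (FreeAlgebra.ι ℂ UqGen.E)

/-- The generator F of U_q(μ,ν). -/
noncomputable def UqF (q μ ν : ℝ) : Uq q μ ν :=
  RingQuot.mkAlgHom ℂ (UqRel q μ ν) (FreeAlgebra.ι ℂ UqGen.F)

/-!
The assignments are compatible with the defining relations of `U_q(μ,ν)`, hence extend from
the free algebra to the quotient. The only nontrivial relation is the last one: in
`[Δ(E), Δ(F)]` the cross terms cancel since `q · q⁻¹ = 1`, leaving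
`[E, F] ⊗ K² + K⁻² ⊗ [E, F]`, and after substituting the relations of `U_q(μ,υ)` and
`U_q(υ,ν)` the two `υ`-terms `∓ λυ K⁻² ⊗ K²` cancel. Uniqueness holds since `E, F, K, K⁻¹`
generate.
-/

def UqGen.eval {A : Type*} (k kinv e f : A) : UqGen → A
  | .K => k
  | .Kinv => kinv
  | .E => e
  | .F => f

structure UqRelations_s2 {A : Type*} [Ring A] [Algebra ℂ A] (q μ ν : ℝ) (k kinv e f : A) :
    Prop where
  kinv_mul_k : kinv * k = 1
  k_mul_kinv : k * kinv = 1
  k_mul_e : k * e = (q : ℂ) • (e * k)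
  k_mul_f : k * f = ((q⁻¹ : ℝ) : ℂ) • (f * k)
  e_mul_f_sub_f_mul_e :
    e * f - f * e = (lamq q : ℂ) • ((μ : ℂ) • (k * k) - (ν : ℂ) • (kinv * kinv))

namespace UqRelations_s2

variable {A B : Type*} [Ring A] [Algebra ℂ A] [Ring B] [Algebra ℂ B]
variable {q μ ν υ : ℝ} {k kinv e f : A}

theorem generators (q μ ν : ℝ) :
    UqRelations_s2 q μ ν (UqK q μ ν) (UqKinv q μ ν) (UqE q μ ν) (UqF q μ ν) := by
  have rel {x y} (h : UqRel q μ ν x y) := RingQuot.mkAlgHom_rel ℂ h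
  refine ⟨?_, ?_, ?_, ?_, ?_⟩
  · have h := rel .inv_left; rw [map_mul, map_one] at h; exact h
  · have h := rel .inv_right; rw [map_mul, map_one] at h; exact h
  · have h := rel .KE; rw [map_mul, map_smul, map_mul] at h; exact h
  · have h := rel .KF; rw [map_mul, map_smul, map_mul] at h; exact h
  · have h := rel .EF; simp only [map_mul, map_smul, map_sub] at h; exact h

theorem e_mul_kinv (h : UqRelations_s2 q μ ν k kinv e f) :
    e * kinv = (q : ℂ) • (kinv * e) := by
  calc e * kinv = kinv * (k * e) * kinv := by
        rw [← mul_assoc, h.kinv_mul_k, one_mul]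
    _ = (q : ℂ) • (kinv * e) := by
        rw [h.k_mul_e, mul_smul_comm, smul_mul_assoc, mul_assoc, mul_assoc, h.k_mul_kinv, mul_one]

theorem f_mul_kinv (h : UqRelations_s2 q μ ν k kinv e f) :
    f * kinv = ((q⁻¹ : ℝ) : ℂ) • (kinv * f) := by
  calc f * kinv = kinv * (k * f) * kinv := by
        rw [← mul_assoc, h.kinv_mul_k, one_mul]
    _ = ((q⁻¹ : ℝ) : ℂ) • (kinv * f) := by
        rw [h.k_mul_f, mul_smul_comm, smul_mul_assoc, mul_assoc, mul_assoc, h.k_mul_kinv, mul_one]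

variable {k' kinv' e' f' : B}

theorem comul_commutator (hq : q ≠ 0) (h : UqRelations_s2 q μ υ k kinv e f)
    (h' : UqRelations_s2 q υ ν k' kinv' e' f') :
    (e ⊗ₜ[ℂ] k' + kinv ⊗ₜ[ℂ] e') * (f ⊗ₜ[ℂ] k' + kinv ⊗ₜ[ℂ] f') -
        (f ⊗ₜ[ℂ] k' + kinv ⊗ₜ[ℂ] f') * (e ⊗ₜ[ℂ] k' + kinv ⊗ₜ[ℂ] e') =
      (e * f - f * e) ⊗ₜ[ℂ] (k' * k') + (kinv * kinv) ⊗ₜ[ℂ] (e' * f' - f' * e') := by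
  have hqq : ((q⁻¹ : ℝ) : ℂ) * (q : ℂ) = 1 := by
    rw [← Complex.ofReal_mul, inv_mul_cancel₀ hq, Complex.ofReal_one]
  simp only [mul_add, add_mul, Algebra.TensorProduct.tmul_mul_tmul, TensorProduct.sub_tmul,
    TensorProduct.tmul_sub, h.e_mul_kinv, h.f_mul_kinv, h'.k_mul_e, h'.k_mul_f,
    TensorProduct.smul_tmul', TensorProduct.tmul_smul, smul_smul, hqq, mul_comm (q : ℂ), one_smul]
  abel

theorem comul (hq : q ≠ 0) (h : UqRelations_s2 q μ υ k kinv e f)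
    (h' : UqRelations_s2 q υ ν k' kinv' e' f') :
    UqRelations_s2 q μ ν (k ⊗ₜ[ℂ] k') (kinv ⊗ₜ[ℂ] kinv')
      (e ⊗ₜ[ℂ] k' + kinv ⊗ₜ[ℂ] e') (f ⊗ₜ[ℂ] k' + kinv ⊗ₜ[ℂ] f') where
  kinv_mul_k := by
    rw [Algebra.TensorProduct.tmul_mul_tmul, h.kinv_mul_k, h'.kinv_mul_k,
      Algebra.TensorProduct.one_def]
  k_mul_kinv := by
    rw [Algebra.TensorProduct.tmul_mul_tmul, h.k_mul_kinv, h'.k_mul_kinv,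
      Algebra.TensorProduct.one_def]
  k_mul_e := by
    simp only [mul_add, add_mul, Algebra.TensorProduct.tmul_mul_tmul, h.k_mul_e, h.k_mul_kinv,
      h.kinv_mul_k, h'.k_mul_e, smul_add, TensorProduct.smul_tmul', TensorProduct.tmul_smul]
  k_mul_f := by
    simp only [mul_add, add_mul, Algebra.TensorProduct.tmul_mul_tmul, h.k_mul_f, h.k_mul_kinv,
      h.kinv_mul_k, h'.k_mul_f, smul_add, TensorProduct.smul_tmul', TensorProduct.tmul_smul]
  e_mul_f_sub_f_mul_e := by
    rw [comul_commutator hq h h', h.e_mul_f_sub_f_mul_e, h'.e_mul_f_sub_f_mul_e]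
    simp only [smul_sub, TensorProduct.sub_tmul, TensorProduct.tmul_sub,
      TensorProduct.smul_tmul', TensorProduct.tmul_smul, Algebra.TensorProduct.tmul_mul_tmul]
    module

end UqRelations_s2

namespace Uq

variable {A : Type*} [Ring A] [Algebra ℂ A] {q μ ν : ℝ} {k kinv e f : A}

noncomputable def lift (h : UqRelations_s2 q μ ν k kinv e f) : Uq q μ ν →ₐ[ℂ] A :=
  RingQuot.liftAlgHom ℂ ⟨FreeAlgebra.lift ℂ (UqGen.eval k kinv e f), fun _ _ hxy => by
    cases hxy <;>
      simp only [map_mul, map_one, map_sub, map_smul, FreeAlgebra.lift_ι_apply, UqGen.eval,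
        h.kinv_mul_k, h.k_mul_kinv, h.k_mul_e, h.k_mul_f, h.e_mul_f_sub_f_mul_e]⟩

theorem lift_apply_mk (h : UqRelations_s2 q μ ν k kinv e f) (g : UqGen) :
    lift h (RingQuot.mkAlgHom ℂ (UqRel q μ ν) (FreeAlgebra.ι ℂ g)) = UqGen.eval k kinv e f g :=
  (RingQuot.liftAlgHom_mkAlgHom_apply ℂ _ _ _).trans (FreeAlgebra.lift_ι_apply _ _)

theorem algHom_ext {φ ψ : Uq q μ ν →ₐ[ℂ] A} (hK : φ (UqK q μ ν) = ψ (UqK q μ ν))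
    (hKinv : φ (UqKinv q μ ν) = ψ (UqKinv q μ ν)) (hE : φ (UqE q μ ν) = ψ (UqE q μ ν))
    (hF : φ (UqF q μ ν) = ψ (UqF q μ ν)) : φ = ψ := by
  refine RingQuot.ringQuot_ext' ℂ φ ψ (FreeAlgebra.hom_ext (funext fun g => ?_))
  cases g
  exacts [hK, hKinv, hE, hF]

end Uq

theorem Uq_comultiplication_exists_unique_general
    (q : ℝ) (hq0 : 0 < q) (μ ν υ : ℝ) :
    ∃! Δ : Uq q μ ν →ₐ[ℂ] (Uq q μ υ ⊗[ℂ] Uq q υ ν),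
      Δ (UqE q μ ν) = UqE q μ υ ⊗ₜ[ℂ] UqK q υ ν + UqKinv q μ υ ⊗ₜ[ℂ] UqE q υ ν ∧
      Δ (UqF q μ ν) = UqF q μ υ ⊗ₜ[ℂ] UqK q υ ν + UqKinv q μ υ ⊗ₜ[ℂ] UqF q υ ν ∧
      Δ (UqK q μ ν) = UqK q μ υ ⊗ₜ[ℂ] UqK q υ ν ∧
      Δ (UqKinv q μ ν) = UqKinv q μ υ ⊗ₜ[ℂ] UqKinv q υ ν := by
  have hΔ := (UqRelations_s2.generators q μ υ).comul hq0.ne' (UqRelations_s2.generators q υ ν)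
  refine ⟨Uq.lift hΔ, ⟨Uq.lift_apply_mk hΔ .E, Uq.lift_apply_mk hΔ .F,
    Uq.lift_apply_mk hΔ .K, Uq.lift_apply_mk hΔ .Kinv⟩, ?_⟩
  rintro Δ ⟨hE, hF, hK, hKinv⟩
  exact Uq.algHom_ext (hK.trans (Uq.lift_apply_mk hΔ .K).symm)
    (hKinv.trans (Uq.lift_apply_mk hΔ .Kinv).symm) (hE.trans (Uq.lift_apply_mk hΔ .E).symm)
    (hF.trans (Uq.lift_apply_mk hΔ .F).symm)

/-- for all real μ, ν, υ there is a unique unital algebra homomorphism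
Δ : U_q(μ,ν) → U_q(μ,υ) ⊗ U_q(υ,ν) with Δ(E) = E⊗K + K⁻¹⊗E, Δ(F) = F⊗K + K⁻¹⊗F,
Δ(K) = K⊗K and Δ(K⁻¹) = K⁻¹⊗K⁻¹. -/
theorem Uq_comultiplication_exists_unique
    (q : ℝ) (hq0 : 0 < q) (hq1 : q < 1) (μ ν υ : ℝ) :
    ∃! Δ : Uq q μ ν →ₐ[ℂ] (Uq q μ υ ⊗[ℂ] Uq q υ ν),
      Δ (UqE q μ ν) = UqE q μ υ ⊗ₜ[ℂ] UqK q υ ν + UqKinv q μ υ ⊗ₜ[ℂ] UqE q υ ν ∧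
      Δ (UqF q μ ν) = UqF q μ υ ⊗ₜ[ℂ] UqK q υ ν + UqKinv q μ υ ⊗ₜ[ℂ] UqF q υ ν ∧
      Δ (UqK q μ ν) = UqK q μ υ ⊗ₜ[ℂ] UqK q υ ν ∧
      Δ (UqKinv q μ ν) = UqKinv q μ υ ⊗ₜ[ℂ] UqKinv q υ ν :=
  Uq_comultiplication_exists_unique_general q hq0 μ ν υ
end

section
/- The homomorphisms Δ^υ_{μν} : U_q(μ,ν) → U_q(μ,υ)⊗U_q(υ,ν) satisfy generalized coassociativity: (Δ^ω_{μυ} ⊗ id) ∘ Δ^υ_{μν} = (id ⊗ Δ^υ_{ων}) ∘ Δ^ω_{μν} for all real μ, ν, υ, ω. -/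
open scoped TensorProduct

theorem Uq.algHom_ext_s3 {q μ ν : ℝ} {A : Type*} [Semiring A] [Algebra ℂ A]
    {f g : Uq q μ ν →ₐ[ℂ] A}
    (hK : f (UqK q μ ν) = g (UqK q μ ν)) (hKinv : f (UqKinv q μ ν) = g (UqKinv q μ ν))
    (hE : f (UqE q μ ν) = g (UqE q μ ν)) (hF : f (UqF q μ ν) = g (UqF q μ ν)) :
    f = g :=
  RingQuot.ringQuot_ext' ℂ (s := UqRel q μ ν) f g <| FreeAlgebra.hom_ext <| funext fun x => by
    cases x
    exacts [hK, hKinv, hE, hF]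

theorem Uq_generalized_coassociativity_general
    (q : ℝ) (μ ν υ ω : ℝ)
    (Δμν_υ : Uq q μ ν →ₐ[ℂ] (Uq q μ υ ⊗[ℂ] Uq q υ ν))
    (Δμν_ω : Uq q μ ν →ₐ[ℂ] (Uq q μ ω ⊗[ℂ] Uq q ω ν))
    (Δμυ_ω : Uq q μ υ →ₐ[ℂ] (Uq q μ ω ⊗[ℂ] Uq q ω υ))
    (Δων_υ : Uq q ω ν →ₐ[ℂ] (Uq q ω υ ⊗[ℂ] Uq q υ ν))
    (h1E : Δμν_υ (UqE q μ ν) = UqE q μ υ ⊗ₜ[ℂ] UqK q υ ν + UqKinv q μ υ ⊗ₜ[ℂ] UqE q υ ν)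
    (h1F : Δμν_υ (UqF q μ ν) = UqF q μ υ ⊗ₜ[ℂ] UqK q υ ν + UqKinv q μ υ ⊗ₜ[ℂ] UqF q υ ν)
    (h1K : Δμν_υ (UqK q μ ν) = UqK q μ υ ⊗ₜ[ℂ] UqK q υ ν)
    (h1Kinv : Δμν_υ (UqKinv q μ ν) = UqKinv q μ υ ⊗ₜ[ℂ] UqKinv q υ ν)
    (h2E : Δμν_ω (UqE q μ ν) = UqE q μ ω ⊗ₜ[ℂ] UqK q ω ν + UqKinv q μ ω ⊗ₜ[ℂ] UqE q ω ν)
    (h2F : Δμν_ω (UqF q μ ν) = UqF q μ ω ⊗ₜ[ℂ] UqK q ω ν + UqKinv q μ ω ⊗ₜ[ℂ] UqF q ω ν)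
    (h2K : Δμν_ω (UqK q μ ν) = UqK q μ ω ⊗ₜ[ℂ] UqK q ω ν)
    (h2Kinv : Δμν_ω (UqKinv q μ ν) = UqKinv q μ ω ⊗ₜ[ℂ] UqKinv q ω ν)
    (h3E : Δμυ_ω (UqE q μ υ) = UqE q μ ω ⊗ₜ[ℂ] UqK q ω υ + UqKinv q μ ω ⊗ₜ[ℂ] UqE q ω υ)
    (h3F : Δμυ_ω (UqF q μ υ) = UqF q μ ω ⊗ₜ[ℂ] UqK q ω υ + UqKinv q μ ω ⊗ₜ[ℂ] UqF q ω υ)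
    (h3K : Δμυ_ω (UqK q μ υ) = UqK q μ ω ⊗ₜ[ℂ] UqK q ω υ)
    (h3Kinv : Δμυ_ω (UqKinv q μ υ) = UqKinv q μ ω ⊗ₜ[ℂ] UqKinv q ω υ)
    (h4E : Δων_υ (UqE q ω ν) = UqE q ω υ ⊗ₜ[ℂ] UqK q υ ν + UqKinv q ω υ ⊗ₜ[ℂ] UqE q υ ν)
    (h4F : Δων_υ (UqF q ω ν) = UqF q ω υ ⊗ₜ[ℂ] UqK q υ ν + UqKinv q ω υ ⊗ₜ[ℂ] UqF q υ ν)
    (h4K : Δων_υ (UqK q ω ν) = UqK q ω υ ⊗ₜ[ℂ] UqK q υ ν)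
    (h4Kinv : Δων_υ (UqKinv q ω ν) = UqKinv q ω υ ⊗ₜ[ℂ] UqKinv q υ ν) :
    ∀ x : Uq q μ ν,
      (Algebra.TensorProduct.assoc ℂ ℂ ℂ (Uq q μ ω) (Uq q ω υ) (Uq q υ ν))
        ((Algebra.TensorProduct.map Δμυ_ω (AlgHom.id ℂ (Uq q υ ν))) (Δμν_υ x))
      = (Algebra.TensorProduct.map (AlgHom.id ℂ (Uq q μ ω)) Δων_υ) (Δμν_ω x) := by
  have h : ((Algebra.TensorProduct.assoc ℂ ℂ ℂ (Uq q μ ω) (Uq q ω υ) (Uq q υ ν)).toAlgHom.comp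
        ((Algebra.TensorProduct.map Δμυ_ω (AlgHom.id ℂ (Uq q υ ν))).comp Δμν_υ)) =
      (Algebra.TensorProduct.map (AlgHom.id ℂ (Uq q μ ω)) Δων_υ).comp Δμν_ω := by
    -- on E both sides are E ⊗ K ⊗ K + K⁻¹ ⊗ E ⊗ K + K⁻¹ ⊗ K⁻¹ ⊗ E, and likewise on F
    apply Uq.algHom_ext_s3 <;>
      simp [h1E, h1F, h1K, h1Kinv, h2E, h2F, h2K, h2Kinv, h3E, h3F, h3K, h3Kinv,
        h4E, h4F, h4K, h4Kinv, TensorProduct.add_tmul,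
        TensorProduct.tmul_add, add_assoc]
  exact DFunLike.congr_fun h

/-- the comultiplications Δ^υ_{μν} : U_q(μ,ν) → U_q(μ,υ)⊗U_q(υ,ν)
(characterized by their values on the generators) satisfy generalized coassociativity:
(Δ^ω_{μυ} ⊗ id) ∘ Δ^υ_{μν} = (id ⊗ Δ^υ_{ων}) ∘ Δ^ω_{μν} (up to the associativity
isomorphism of the tensor product). -/
theorem Uq_generalized_coassociativity
    (q : ℝ) (hq0 : 0 < q) (hq1 : q < 1) (μ ν υ ω : ℝ)
    (Δμν_υ : Uq q μ ν →ₐ[ℂ] (Uq q μ υ ⊗[ℂ] Uq q υ ν))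
    (Δμν_ω : Uq q μ ν →ₐ[ℂ] (Uq q μ ω ⊗[ℂ] Uq q ω ν))
    (Δμυ_ω : Uq q μ υ →ₐ[ℂ] (Uq q μ ω ⊗[ℂ] Uq q ω υ))
    (Δων_υ : Uq q ω ν →ₐ[ℂ] (Uq q ω υ ⊗[ℂ] Uq q υ ν))
    (h1E : Δμν_υ (UqE q μ ν) = UqE q μ υ ⊗ₜ[ℂ] UqK q υ ν + UqKinv q μ υ ⊗ₜ[ℂ] UqE q υ ν)
    (h1F : Δμν_υ (UqF q μ ν) = UqF q μ υ ⊗ₜ[ℂ] UqK q υ ν + UqKinv q μ υ ⊗ₜ[ℂ] UqF q υ ν)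
    (h1K : Δμν_υ (UqK q μ ν) = UqK q μ υ ⊗ₜ[ℂ] UqK q υ ν)
    (h1Kinv : Δμν_υ (UqKinv q μ ν) = UqKinv q μ υ ⊗ₜ[ℂ] UqKinv q υ ν)
    (h2E : Δμν_ω (UqE q μ ν) = UqE q μ ω ⊗ₜ[ℂ] UqK q ω ν + UqKinv q μ ω ⊗ₜ[ℂ] UqE q ω ν)
    (h2F : Δμν_ω (UqF q μ ν) = UqF q μ ω ⊗ₜ[ℂ] UqK q ω ν + UqKinv q μ ω ⊗ₜ[ℂ] UqF q ω ν)
    (h2K : Δμν_ω (UqK q μ ν) = UqK q μ ω ⊗ₜ[ℂ] UqK q ω ν)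
    (h2Kinv : Δμν_ω (UqKinv q μ ν) = UqKinv q μ ω ⊗ₜ[ℂ] UqKinv q ω ν)
    (h3E : Δμυ_ω (UqE q μ υ) = UqE q μ ω ⊗ₜ[ℂ] UqK q ω υ + UqKinv q μ ω ⊗ₜ[ℂ] UqE q ω υ)
    (h3F : Δμυ_ω (UqF q μ υ) = UqF q μ ω ⊗ₜ[ℂ] UqK q ω υ + UqKinv q μ ω ⊗ₜ[ℂ] UqF q ω υ)
    (h3K : Δμυ_ω (UqK q μ υ) = UqK q μ ω ⊗ₜ[ℂ] UqK q ω υ)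
    (h3Kinv : Δμυ_ω (UqKinv q μ υ) = UqKinv q μ ω ⊗ₜ[ℂ] UqKinv q ω υ)
    (h4E : Δων_υ (UqE q ω ν) = UqE q ω υ ⊗ₜ[ℂ] UqK q υ ν + UqKinv q ω υ ⊗ₜ[ℂ] UqE q υ ν)
    (h4F : Δων_υ (UqF q ω ν) = UqF q ω υ ⊗ₜ[ℂ] UqK q υ ν + UqKinv q ω υ ⊗ₜ[ℂ] UqF q υ ν)
    (h4K : Δων_υ (UqK q ω ν) = UqK q ω υ ⊗ₜ[ℂ] UqK q υ ν)
    (h4Kinv : Δων_υ (UqKinv q ω ν) = UqKinv q ω υ ⊗ₜ[ℂ] UqKinv q υ ν) :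
    ∀ x : Uq q μ ν,
      (Algebra.TensorProduct.assoc ℂ ℂ ℂ (Uq q μ ω) (Uq q ω υ) (Uq q υ ν))
        ((Algebra.TensorProduct.map Δμυ_ω (AlgHom.id ℂ (Uq q υ ν))) (Δμν_υ x))
      = (Algebra.TensorProduct.map (AlgHom.id ℂ (Uq q μ ω)) Δων_υ) (Δμν_ω x) :=
  Uq_generalized_coassociativity_general q μ ν υ ω Δμν_υ Δμν_ω Δμυ_ω Δων_υ h1E h1F h1K h1Kinv h2E
    h2F h2K h2Kinv h3E h3F h3K h3Kinv h4E h4F h4K h4Kinv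
end

section
/- Let A^τ_{μν} = U_q(μ,ν)/(C − τq⁻¹λ²·1) where C is the Casimir element. In A^τ_{μν}, set X = q^{1/2}(q⁻¹ − q)·π(FK) and Z = π(K²). Then X*X = −q²ν + τZ − μZ² and XX* = −q²ν + q²τZ − q⁴μZ², where the * on U_q(μ,ν) is determined by K* = K and E* = F. -/
/-- in A^τ_{μν} = U_q(μ,ν)/(C − τq⁻¹λ²) (formalized: in any unital
*-algebra with elements K, K⁻¹, E, F satisfying the defining relations of U_q(μ,ν),
the *-structure K* = K, E* = F, and the Casimir relation C = τq⁻¹λ²·1), the elements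
X = q^{1/2}(q⁻¹−q)·FK and Z = K² satisfy X*X = −q²ν + τZ − μZ² and
XX* = −q²ν + q²τZ − q⁴μZ². -/
theorem A_quotient_XZ_relations
    {A : Type*} [Ring A] [Algebra ℂ A] [StarRing A] [StarModule ℂ A]
    (q μ ν τ : ℝ) (hq0 : 0 < q) (hq1 : q < 1)
    (lam : ℝ) (hlam : lam = (q - q⁻¹)⁻¹)
    (K Kinv E F : A)
    (hKinvK : Kinv * K = 1) (hKKinv : K * Kinv = 1)
    (hKE : K * E = (q : ℂ) • (E * K))
    (hKF : K * F = ((q⁻¹ : ℝ) : ℂ) • (F * K))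
    (hEF : E * F - F * E =
      (lam : ℂ) • ((μ : ℂ) • (K * K) - (ν : ℂ) • (Kinv * Kinv)))
    (hKstar : star K = K) (hEstar : star E = F)
    (hCas : E * F + ((lam ^ 2 * q⁻¹ * μ : ℝ) : ℂ) • (K * K)
              + ((lam ^ 2 * q * ν : ℝ) : ℂ) • (Kinv * Kinv)
            = algebraMap ℂ A ((τ * q⁻¹ * lam ^ 2 : ℝ) : ℂ))
    (X Z : A)
    (hX : X = ((Real.sqrt q * (q⁻¹ - q) : ℝ) : ℂ) • (F * K))
    (hZ : Z = K * K) :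
    star X * X = algebraMap ℂ A ((-(q ^ 2) * ν : ℝ) : ℂ)
        + ((τ : ℝ) : ℂ) • Z - ((μ : ℝ) : ℂ) • (Z * Z) ∧
    X * star X = algebraMap ℂ A ((-(q ^ 2) * ν : ℝ) : ℂ)
        + ((q ^ 2 * τ : ℝ) : ℂ) • Z - ((q ^ 4 * μ : ℝ) : ℂ) • (Z * Z) := by
  have hqne : q ≠ 0 := ne_of_gt hq0
  have hqinv : 1 < q⁻¹ := (one_lt_inv₀ hq0).mpr hq1
  have hqq : q - q⁻¹ ≠ 0 := by linarith
  have hsq : Real.sqrt q * Real.sqrt q = q := Real.mul_self_sqrt hq0.le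
  have hFstar : star F = E := by rw [← hEstar, star_star]
  set c : ℝ := Real.sqrt q * (q⁻¹ - q) with hc
  have hEF' : E * F = algebraMap ℂ A ((τ * q⁻¹ * lam ^ 2 : ℝ) : ℂ)
      - ((lam ^ 2 * q⁻¹ * μ : ℝ) : ℂ) • (K * K)
      - ((lam ^ 2 * q * ν : ℝ) : ℂ) • (Kinv * Kinv) := by
    rw [← hCas]; abel
  have hXstar : star X = ((c : ℝ) : ℂ) • (K * E) := by
    rw [hX, star_smul, star_mul, hKstar, hFstar, Complex.star_def, Complex.conj_ofReal]
  have hKi : K * (Kinv * Kinv) * K = 1 := by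
    rw [show K * (Kinv * Kinv) * K = (K * Kinv) * (Kinv * K) by noncomm_ring,
      hKKinv, hKinvK, one_mul]
  have hKi2 : (Kinv * Kinv) * (K * K) = 1 := by
    rw [show (Kinv * Kinv) * (K * K) = Kinv * (Kinv * K) * K by noncomm_ring,
      hKinvK, mul_one, hKinvK]
  -- first identity
  have h1 : star X * X = ((c : ℝ) : ℂ) • (((c : ℝ) : ℂ) • (K * ((E * F) * K))) := by
    rw [hXstar, hX, smul_mul_assoc, mul_smul_comm]
    congr 1; congr 1; noncomm_ring
  have hmid : K * ((E * F) * K) =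
      ((τ * q⁻¹ * lam ^ 2 : ℝ) : ℂ) • Z
      - ((lam ^ 2 * q⁻¹ * μ : ℝ) : ℂ) • (Z * Z)
      - ((lam ^ 2 * q * ν : ℝ) : ℂ) • (1 : A) := by
    rw [hEF']
    simp only [sub_mul, mul_sub, smul_mul_assoc, mul_smul_comm,
      Algebra.algebraMap_eq_smul_one, one_mul, mul_one]
    rw [show K * ((K * K) * K) = (K * K) * (K * K) by noncomm_ring,
        show K * ((Kinv * Kinv) * K) = K * (Kinv * Kinv) * K by noncomm_ring, hKi, hZ]
  -- coefficient identities (real)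
  have hcc : c * c = q * (q⁻¹ - q) ^ 2 := by
    rw [hc, show Real.sqrt q * (q⁻¹ - q) * (Real.sqrt q * (q⁻¹ - q))
      = (Real.sqrt q * Real.sqrt q) * (q⁻¹ - q) ^ 2 by ring, hsq]
  have hl2 : (q⁻¹ - q) ^ 2 * lam ^ 2 = 1 := by
    rw [hlam, show (q⁻¹ - q) ^ 2 = (q - q⁻¹) ^ 2 by ring, inv_pow,
      mul_inv_cancel₀ (pow_ne_zero 2 hqq)]
  have hq1' : q * q⁻¹ = 1 := mul_inv_cancel₀ hqne
  have e1 : c * (c * (τ * q⁻¹ * lam ^ 2)) = τ := by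
    rw [← mul_assoc, hcc, show q * (q⁻¹ - q) ^ 2 * (τ * q⁻¹ * lam ^ 2)
      = ((q⁻¹ - q) ^ 2 * lam ^ 2) * (q * q⁻¹) * τ by ring, hl2, hq1']; ring
  have e2 : c * (c * (lam ^ 2 * q⁻¹ * μ)) = μ := by
    rw [← mul_assoc, hcc, show q * (q⁻¹ - q) ^ 2 * (lam ^ 2 * q⁻¹ * μ)
      = ((q⁻¹ - q) ^ 2 * lam ^ 2) * (q * q⁻¹) * μ by ring, hl2, hq1']; ring
  have e3 : c * (c * (lam ^ 2 * q * ν)) = q ^ 2 * ν := by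
    rw [← mul_assoc, hcc, show q * (q⁻¹ - q) ^ 2 * (lam ^ 2 * q * ν)
      = ((q⁻¹ - q) ^ 2 * lam ^ 2) * (q ^ 2 * ν) by ring, hl2]; ring
  have part1 : star X * X = algebraMap ℂ A ((-(q ^ 2) * ν : ℝ) : ℂ)
      + ((τ : ℝ) : ℂ) • Z - ((μ : ℝ) : ℂ) • (Z * Z) := by
    rw [h1, hmid, Algebra.algebraMap_eq_smul_one]
    simp only [smul_sub, smul_smul, ← Complex.ofReal_mul, e1, e2, e3]
    push_cast
    module
  -- second identity
  have hFE : F * E = E * F - (lam : ℂ) • ((μ : ℂ) • (K * K) - (ν : ℂ) • (Kinv * Kinv)) := by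
    rw [← hEF]; abel
  have h3 : K * (K * E) = (q : ℂ) • ((q : ℂ) • (E * (K * K))) := by
    rw [hKE, mul_smul_comm, ← mul_assoc, hKE, smul_mul_assoc, mul_assoc]
  have hstep : F * K * (K * E) = (((q * q : ℝ)) : ℂ) • (F * (E * (K * K))) := by
    rw [mul_assoc, h3, mul_smul_comm, mul_smul_comm, smul_smul]
    norm_cast
  have h2 : X * star X = (((c * c * (q * q) : ℝ)) : ℂ) • (F * (E * (K * K))) := by
    rw [hXstar, hX, smul_mul_assoc, mul_smul_comm, smul_smul, hstep, smul_smul]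
    norm_cast
  have hmid2 : F * (E * (K * K)) =
      ((τ * q⁻¹ * lam ^ 2 : ℝ) : ℂ) • Z
      - ((lam ^ 2 * q⁻¹ * μ : ℝ) : ℂ) • (Z * Z)
      - ((lam ^ 2 * q * ν : ℝ) : ℂ) • (1 : A)
      - (lam : ℂ) • ((μ : ℂ) • (Z * Z) - (ν : ℂ) • (1 : A)) := by
    rw [← mul_assoc, hFE, sub_mul, hEF']
    simp only [sub_mul, smul_mul_assoc, smul_sub, Algebra.algebraMap_eq_smul_one, one_mul]
    rw [hKi2, hZ]
  have G1 : c * c * (q * q) * (τ * q⁻¹ * lam ^ 2) = q ^ 2 * τ := by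
    rw [hcc, show q * (q⁻¹ - q) ^ 2 * (q * q) * (τ * q⁻¹ * lam ^ 2)
      = ((q⁻¹ - q) ^ 2 * lam ^ 2) * (q * q⁻¹) * (q ^ 2 * τ) by ring, hl2, hq1']; ring
  have G2 : c * c * (q * q) * (lam ^ 2 * q⁻¹ * μ) = q ^ 2 * μ := by
    rw [hcc, show q * (q⁻¹ - q) ^ 2 * (q * q) * (lam ^ 2 * q⁻¹ * μ)
      = ((q⁻¹ - q) ^ 2 * lam ^ 2) * (q * q⁻¹) * (q ^ 2 * μ) by ring, hl2, hq1']; ring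
  have G3 : c * c * (q * q) * (lam ^ 2 * q * ν) = q ^ 4 * ν := by
    rw [hcc, show q * (q⁻¹ - q) ^ 2 * (q * q) * (lam ^ 2 * q * ν)
      = ((q⁻¹ - q) ^ 2 * lam ^ 2) * (q ^ 4 * ν) by ring, hl2]; ring
  have hl1 : (q⁻¹ - q) * lam = -1 := by
    rw [hlam, show (q⁻¹ - q) = -(q - q⁻¹) by ring, neg_mul, mul_inv_cancel₀ hqq]
  have G4 : c * c * (q * q) * (lam * μ) = q ^ 4 * μ - q ^ 2 * μ := by
    rw [hcc, show q * (q⁻¹ - q) ^ 2 * (q * q) * (lam * μ)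
      = ((q⁻¹ - q) * lam) * ((q * q⁻¹) * (q ^ 2 * μ) - q ^ 4 * μ) by ring, hl1, hq1']; ring
  have G5 : c * c * (q * q) * (lam * ν) = q ^ 4 * ν - q ^ 2 * ν := by
    rw [hcc, show q * (q⁻¹ - q) ^ 2 * (q * q) * (lam * ν)
      = ((q⁻¹ - q) * lam) * ((q * q⁻¹) * (q ^ 2 * ν) - q ^ 4 * ν) by ring, hl1, hq1']; ring
  refine ⟨part1, ?_⟩
  rw [h2, hmid2, Algebra.algebraMap_eq_smul_one]
  simp only [smul_sub, smul_smul, ← Complex.ofReal_mul, G1, G2, G3, G4, G5]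
  push_cast
  module
end

section
/- The Miyashita–Ulbrich action formula for the generator E acting on X: in A^τ_{μν}, the element q^{1/2}(q⁻¹−q)·π(E(FK)K⁻¹ + K⁻¹(FK)(−qE)) equals q^{1/2}τ·1 − q^{1/2}(1+q²)μ·π(K²). -/
/-!
Conjugating by `K` gives `K⁻¹(FK) = qF`, and `E(FK)K⁻¹ = EF`, so the bracket is `EF − q²FE`.
The relation `[E, F] = λ(μK² − νK⁻²)` eliminates `FE` and the Casimir relation eliminates `EF`,
leaving a linear combination of `1`, `K²`, `K⁻²` whose coefficients reduce to those claimed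
using only `λ(q − q⁻¹) = 1`.
-/

section
variable {𝕜 A : Type*} [Field 𝕜] [Ring A] [Algebra 𝕜 A]

theorem inv_mul_mul_eq_smul_of_mul_eq_smul_mul {K Kinv F : A} {c : 𝕜} (hc : c ≠ 0)
    (hKinvK : Kinv * K = 1) (hKF : K * F = c • (F * K)) :
    Kinv * (F * K) = c⁻¹ • F := by
  have hF : F = c • (Kinv * (F * K)) := by
    rw [← mul_smul_comm, ← hKF, ← mul_assoc, hKinvK, one_mul]
  rw [hF, smul_smul, inv_mul_cancel₀ hc, one_smul, ← hF]

theorem smul_mul_sub_sq_smul_mul_eq_of_casimir {K Kinv E F : A} {q lam μ ν τ : 𝕜}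
    (hq : q ≠ 0) (hlam : lam * (q - q⁻¹) = 1)
    (hEF : E * F - F * E = lam • (μ • (K * K) - ν • (Kinv * Kinv)))
    (hCas : E * F + (lam ^ 2 * q⁻¹ * μ) • (K * K) + (lam ^ 2 * q * ν) • (Kinv * Kinv)
      = algebraMap 𝕜 A (τ * q⁻¹ * lam ^ 2)) :
    (q⁻¹ - q) • (E * F - q ^ 2 • (F * E)) = algebraMap 𝕜 A τ - ((1 + q ^ 2) * μ) • (K * K) := by
  have hlam_sq : lam * (q ^ 2 - 1) = q := by
    field_simp at hlam
    linear_combination hlam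
  have hFE : F * E = E * F - lam • (μ • (K * K) - ν • (Kinv * Kinv)) := by
    rw [← hEF, sub_sub_cancel]
  have hEF' : E * F = (τ * q⁻¹ * lam ^ 2) • 1 - (lam ^ 2 * q⁻¹ * μ) • (K * K)
      - (lam ^ 2 * q * ν) • (Kinv * Kinv) := by
    rw [← Algebra.algebraMap_eq_smul_one, ← hCas]
    abel
  rw [hFE, hEF', Algebra.algebraMap_eq_smul_one]
  match_scalars <;> field_simp
  · linear_combination τ * (lam * (q ^ 2 - 1) + q) * hlam_sq
  · linear_combination -μ * (lam * (q ^ 2 - 1) + q + q ^ 3) * hlam_sq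
  · linear_combination -ν * lam * (q ^ 2 - 1) * hlam_sq

end

theorem MU_action_E_on_X_general
    {A : Type*} [Ring A] [Algebra ℂ A]
    (q μ ν τ : ℝ) (hq0 : 0 < q) (hq1 : q < 1)
    (lam : ℝ) (hlam : lam = (q - q⁻¹)⁻¹)
    (K Kinv E F : A)
    (hKinvK : Kinv * K = 1) (hKKinv : K * Kinv = 1)
    (hKF : K * F = ((q⁻¹ : ℝ) : ℂ) • (F * K))
    (hEF : E * F - F * E =
      (lam : ℂ) • ((μ : ℂ) • (K * K) - (ν : ℂ) • (Kinv * Kinv)))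
    (hCas : E * F + ((lam ^ 2 * q⁻¹ * μ : ℝ) : ℂ) • (K * K)
              + ((lam ^ 2 * q * ν : ℝ) : ℂ) • (Kinv * Kinv)
            = algebraMap ℂ A ((τ * q⁻¹ * lam ^ 2 : ℝ) : ℂ)) :
    ((Real.sqrt q * (q⁻¹ - q) : ℝ) : ℂ) •
        (E * (F * K) * Kinv + Kinv * (F * K) * (-((q : ℂ) • E)))
      = algebraMap ℂ A ((Real.sqrt q * τ : ℝ) : ℂ)
        - ((Real.sqrt q * (1 + q ^ 2) * μ : ℝ) : ℂ) • (K * K) := by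
  have hq : (q : ℂ) ≠ 0 := by exact_mod_cast hq0.ne'
  have hlam' : (lam : ℂ) * (q - (q : ℂ)⁻¹) = 1 := by
    have hqq : q - q⁻¹ ≠ 0 := by linarith [one_lt_inv₀ hq0 |>.mpr hq1]
    rw [hlam]
    exact_mod_cast inv_mul_cancel₀ hqq
  have hKinvFK : Kinv * (F * K) = (q : ℂ) • F := by
    push_cast at hKF
    simpa using inv_mul_mul_eq_smul_of_mul_eq_smul_mul (inv_ne_zero hq) hKinvK hKF
  have hEFK : E * (F * K) * Kinv = E * F := by
    rw [← mul_assoc, mul_assoc _ K, hKKinv, mul_one]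
  have hbracket := smul_mul_sub_sq_smul_mul_eq_of_casimir (τ := (τ : ℂ)) hq hlam' hEF
    (by simpa using hCas)
  rw [hEFK, hKinvFK, mul_neg, smul_mul_smul_comm, ← sq, ← sub_eq_add_neg,
    Algebra.algebraMap_eq_smul_one]
  rw [Algebra.algebraMap_eq_smul_one] at hbracket
  push_cast
  rw [mul_smul, hbracket]
  module

/-- the Miyashita–Ulbrich action formula E ▷ X.  In A^τ_{μν} (formalized:
in any unital ℂ-algebra with elements K, K⁻¹, E, F satisfying the defining relations of
U_q(μ,ν) together with the Casimir relation C = τq⁻¹λ²·1), one has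
q^{1/2}(q⁻¹−q)·(E(FK)K⁻¹ + K⁻¹(FK)(−qE)) = q^{1/2}τ·1 − q^{1/2}(1+q²)μ·K². -/
theorem MU_action_E_on_X
    {A : Type*} [Ring A] [Algebra ℂ A]
    (q μ ν τ : ℝ) (hq0 : 0 < q) (hq1 : q < 1)
    (lam : ℝ) (hlam : lam = (q - q⁻¹)⁻¹)
    (K Kinv E F : A)
    (hKinvK : Kinv * K = 1) (hKKinv : K * Kinv = 1)
    (hKE : K * E = (q : ℂ) • (E * K))
    (hKF : K * F = ((q⁻¹ : ℝ) : ℂ) • (F * K))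
    (hEF : E * F - F * E =
      (lam : ℂ) • ((μ : ℂ) • (K * K) - (ν : ℂ) • (Kinv * Kinv)))
    (hCas : E * F + ((lam ^ 2 * q⁻¹ * μ : ℝ) : ℂ) • (K * K)
              + ((lam ^ 2 * q * ν : ℝ) : ℂ) • (Kinv * Kinv)
            = algebraMap ℂ A ((τ * q⁻¹ * lam ^ 2 : ℝ) : ℂ)) :
    ((Real.sqrt q * (q⁻¹ - q) : ℝ) : ℂ) •
        (E * (F * K) * Kinv + Kinv * (F * K) * (-((q : ℂ) • E)))
      = algebraMap ℂ A ((Real.sqrt q * τ : ℝ) : ℂ)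
        - ((Real.sqrt q * (1 + q ^ 2) * μ : ℝ) : ℂ) • (K * K) :=
  MU_action_E_on_X_general q μ ν τ hq0 hq1 lam hlam K Kinv E F hKinvK hKKinv hKF hEF hCas
end

section
/- In A^τ_{μν}, the element π(F(FK)K⁻¹ + K⁻¹(FK)(−q⁻¹F)) equals 0, i.e. F ▷ X = 0 for the Miyashita–Ulbrich action. -/
/-- the Miyashita–Ulbrich action formula F ▷ X = 0.  In A^τ_{μν}
(formalized: in any unital ℂ-algebra with elements K, K⁻¹, E, F satisfying the defining
relations of U_q(μ,ν) together with the Casimir relation C = τq⁻¹λ²·1), one has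
F(FK)K⁻¹ + K⁻¹(FK)(−q⁻¹F) = 0. -/
theorem MU_action_F_on_X
    {A : Type*} [Ring A] [Algebra ℂ A]
    (q μ ν τ : ℝ) (hq0 : 0 < q) (hq1 : q < 1)
    (lam : ℝ) (hlam : lam = (q - q⁻¹)⁻¹)
    (K Kinv E F : A)
    (hKinvK : Kinv * K = 1) (hKKinv : K * Kinv = 1)
    (hKE : K * E = (q : ℂ) • (E * K))
    (hKF : K * F = ((q⁻¹ : ℝ) : ℂ) • (F * K))
    (hEF : E * F - F * E =
      (lam : ℂ) • ((μ : ℂ) • (K * K) - (ν : ℂ) • (Kinv * Kinv)))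
    (hCas : E * F + ((lam ^ 2 * q⁻¹ * μ : ℝ) : ℂ) • (K * K)
              + ((lam ^ 2 * q * ν : ℝ) : ℂ) • (Kinv * Kinv)
            = algebraMap ℂ A ((τ * q⁻¹ * lam ^ 2 : ℝ) : ℂ)) :
    F * (F * K) * Kinv + Kinv * (F * K) * (-(((q⁻¹ : ℝ) : ℂ) • F)) = 0 := by
  have hq : (q : ℂ) ≠ 0 := by exact_mod_cast hq0.ne'
  have h1 : Kinv * (F * K) = (q : ℂ) • F := by
    have h := congrArg (fun x => (q : ℂ) • (Kinv * x)) hKF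
    simp only [mul_smul_comm, smul_smul] at h
    push_cast at h
    rw [mul_inv_cancel₀ hq, one_smul, ← mul_assoc, hKinvK, one_mul] at h
    exact h.symm
  calc F * (F * K) * Kinv + Kinv * (F * K) * (-(((q⁻¹ : ℝ) : ℂ) • F))
      = F * F * (K * Kinv) + ((q : ℂ) • F) * (-(((q⁻¹ : ℝ) : ℂ) • F)) := by
        rw [h1]; noncomm_ring
    _ = F * F - ((q : ℂ) * ((q⁻¹ : ℝ) : ℂ)) • (F * F) := by
        rw [hKKinv, mul_one, mul_neg, smul_mul_smul_comm, ← sub_eq_add_neg]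
    _ = 0 := by
        push_cast; rw [mul_inv_cancel₀ hq, one_smul, sub_self]
end

section
/- Let H = ⊕_{i,j∈{0,1}} H_{ij} be a direct sum of algebras with comultiplications Δ^k_{ij} : H_{ij} → H_{ik}⊗H_{kj} forming a co-linking structure, and ε_H : H → ℂ defined by ε_H(x_{ij}) = δ_{ij}ε_i(x_{ii}) where ε_i is the counit of the Hopf algebra H_{ii}. Then ε_H satisfies the weak-bialgebra monoidality condition ε_H(xy₍₁₎)ε_H(y₍₂₎z) = ε_H(xyz) for all x ∈ H_{μν}, y ∈ H_{υω}, z ∈ H_{ϖϑ}, where the Sweedler sum runs over Δ_H(y) = Σ_κ Δ^κ_{υω}(y). -/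
open scoped TensorProduct

set_option maxHeartbeats 2000000

private lemma single_mul_single' {ι : Type*} [DecidableEq ι] {M : ι → Type*}
    [∀ i, MulZeroClass (M i)] (p : ι) (a b : M p) :
    Pi.single p a * Pi.single p b = Pi.single p (a * b) := by
  funext r
  by_cases h : r = p
  · subst h; simp
  · simp [Pi.mul_apply, Pi.single_eq_of_ne h]

private lemma single_mul_single_ne' {ι : Type*} [DecidableEq ι] {M : ι → Type*}
    [∀ i, MulZeroClass (M i)] {p q : ι} (h : p ≠ q) (a : M p) (b : M q) :
    Pi.single p a * Pi.single q b = 0 := by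
  funext r
  by_cases hr : r = p
  · subst hr; simp [Pi.mul_apply, Pi.single_eq_of_ne h]
  · simp [Pi.mul_apply, Pi.single_eq_of_ne hr]

private lemma sum_eps {B C : Type*} [Ring B] [Ring C] [Algebra ℂ B] [Algebra ℂ C]
    (εB : B →ₐ[ℂ] ℂ) (εC : C →ₐ[ℂ] ℂ) {m : ℕ} (y1 : Fin m → B) (y2 : Fin m → C) (yv : C)
    (h : TensorProduct.map εB.toLinearMap LinearMap.id (∑ t, y1 t ⊗ₜ[ℂ] y2 t)
        = (1 : ℂ) ⊗ₜ[ℂ] yv) :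
    ∑ t, εB (y1 t) * εC (y2 t) = εC yv := by
  have h2 := congrArg
    (fun w => (TensorProduct.lid ℂ ℂ) (TensorProduct.map LinearMap.id εC.toLinearMap w)) h
  simpa [map_sum, TensorProduct.map_tmul, TensorProduct.lid_tmul, smul_eq_mul] using h2

/-- the counit ε_H of the direct sum H = ⊕_{ij} H_{ij} of a co-linking
weak Hopf algebra, defined by ε_H(x_{ij}) = δ_{ij}ε_i(x_{ii}), satisfies the
weak-bialgebra monoidality condition ε_H(x·y₍₁₎)ε_H(y₍₂₎·z) = ε_H(x·y·z), where the
Sweedler sum runs over Δ_H(y) = Σ_κ Δ^κ(y).  The direct sum H is formalized as the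
product Π_{p : Bool × Bool} A p with componentwise multiplication; x, y, z sit in single
components via `Pi.single`, and the Sweedler legs of y are given by an arbitrary finite
pure-tensor decomposition of each Δ^κ(y). -/
theorem colinking_counit_monoidality
    {A : Bool × Bool → Type*} [∀ p, Ring (A p)] [∀ p, Algebra ℂ (A p)]
    (Δ : ∀ i j k : Bool, A (i, j) →ₐ[ℂ] (A (i, k) ⊗[ℂ] A (k, j)))
    (ε : ∀ i : Bool, A (i, i) →ₐ[ℂ] ℂ)
    -- counit property of the left coactions: (ε_i ⊗ id)(Δ^i_{ij}(y)) = 1 ⊗ y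
    (hcounitL : ∀ (i j : Bool) (y : A (i, j)),
      TensorProduct.map (ε i).toLinearMap LinearMap.id (Δ i j i y) = (1 : ℂ) ⊗ₜ[ℂ] y)
    -- counit property of the right coactions: (id ⊗ ε_j)(Δ^j_{ij}(y)) = y ⊗ 1
    (hcounitR : ∀ (i j : Bool) (y : A (i, j)),
      TensorProduct.map LinearMap.id (ε j).toLinearMap (Δ i j j y) = y ⊗ₜ[ℂ] (1 : ℂ))
    (εH : (∀ p : Bool × Bool, A p) → ℂ)
    (hεH : ∀ h, εH h = ε false (h (false, false)) + ε true (h (true, true)))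
    {μ ν υ ω ϖ ϑ : Bool}
    (x : A (μ, ν)) (y : A (υ, ω)) (z : A (ϖ, ϑ))
    (n : Bool → ℕ)
    (y1 : ∀ κ : Bool, Fin (n κ) → A (υ, κ))
    (y2 : ∀ κ : Bool, Fin (n κ) → A (κ, ω))
    (hy : ∀ κ : Bool, Δ υ ω κ y = ∑ t : Fin (n κ), y1 κ t ⊗ₜ[ℂ] y2 κ t) :
    ∑ κ : Bool, ∑ t : Fin (n κ),
        εH (Pi.single (μ, ν) x * Pi.single (υ, κ) (y1 κ t)) *
          εH (Pi.single (κ, ω) (y2 κ t) * Pi.single (ϖ, ϑ) z)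
      = εH (Pi.single (μ, ν) x * Pi.single (υ, ω) y * Pi.single (ϖ, ϑ) z) := by
  cases μ <;> cases ν <;> cases υ <;> cases ω <;> cases ϖ <;> cases ϑ <;>
  first
  | (simp [hεH, Fintype.sum_bool, single_mul_single', single_mul_single_ne',
      Pi.single_eq_same, Pi.single_eq_of_ne]; done)
  | (have h := hcounitL _ _ y
     rw [hy _] at h
     have k := sum_eps (ε _) (ε _) (y1 _) (y2 _) y h
     simp [hεH, Fintype.sum_bool, single_mul_single', single_mul_single_ne',
       Pi.single_eq_same, Pi.single_eq_of_ne]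
     rw [← k, Finset.mul_sum, Finset.sum_mul]
     exact Finset.sum_congr rfl fun t _ => by ring)
end

section
/- In the direct sum H of the four algebras H_{ij} of a co-linking weak Hopf algebra, the unit 1_H = Σ_{i,j} 1_{ij} satisfies the weak-bialgebra comonoidality condition (Δ_H(1_H)⊗1_H)(1_H⊗Δ_H(1_H)) = (Δ_H⊗id)(Δ_H(1_H)), namely both sides equal Σ 1_{μυ}⊗1_{υω}⊗1_{ων}. -/
set_option synthInstance.maxHeartbeats 1000000
set_option maxHeartbeats 1000000
set_option maxRecDepth 100000

open scoped TensorProduct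

private lemma single_one_mul_single_one {A : Bool × Bool → Type*} [∀ p, Ring (A p)]
    (p q : Bool × Bool) :
    (Pi.single p (1 : A p) * Pi.single q 1) = if q = p then Pi.single p (1 : A p) else 0 := by
  split_ifs with h
  · subst h
    funext r
    rw [Pi.mul_apply]
    by_cases h1 : r = q
    · subst h1; rw [Pi.single_eq_same, one_mul]
    · rw [Pi.single_eq_of_ne h1, zero_mul]
  · funext r
    rw [Pi.mul_apply, Pi.zero_apply]
    by_cases h1 : r = p
    · subst h1
      rw [Pi.single_eq_of_ne (fun hh => h hh.symm), mul_zero]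
    · rw [Pi.single_eq_of_ne h1, zero_mul]

set_option maxHeartbeats 4000000 in
/-- the comonoidality condition for the unit of the direct sum H of the
four corner algebras of a co-linking weak Hopf algebra:
(Δ_H(1_H)⊗1_H)·(1_H⊗Δ_H(1_H)) = (Δ_H⊗id)(Δ_H(1_H)), and both sides equal
Σ_{μ,υ,ω,ν} 1_{μυ}⊗1_{υω}⊗1_{ων}.  Here H = Π_{p : Bool × Bool} A p with componentwise
multiplication, Δ_H is assembled from the component comultiplications Δ^k_{ij}
(Δ_H(x) = Σ_k Δ^k_{ij}(x) for x ∈ A (i,j), embedded via `Pi.single`/`LinearMap.single`),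
and the middle factor of the left-hand side is reassociated via the associator. -/
theorem colinking_unit_comonoidality
    {A : Bool × Bool → Type*} [∀ p, Ring (A p)] [∀ p, Algebra ℂ (A p)]
    (Δ : ∀ i j k : Bool, A (i, j) →ₐ[ℂ] (A (i, k) ⊗[ℂ] A (k, j)))
    (ΔH : (∀ p : Bool × Bool, A p) →ₗ[ℂ] ((∀ p, A p) ⊗[ℂ] (∀ p, A p)))
    (hΔH : ΔH = ∑ i : Bool, ∑ j : Bool, ∑ k : Bool,
      (TensorProduct.map (LinearMap.single ℂ A (i, k)) (LinearMap.single ℂ A (k, j))) ∘ₗ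
        (Δ i j k).toLinearMap ∘ₗ LinearMap.proj (i, j)) :
    (ΔH 1 ⊗ₜ[ℂ] (1 : ∀ p, A p)) *
        ((TensorProduct.assoc ℂ (∀ p, A p) (∀ p, A p) (∀ p, A p)).symm
          ((1 : ∀ p, A p) ⊗ₜ[ℂ] ΔH 1))
      = (TensorProduct.map ΔH LinearMap.id) (ΔH 1) ∧
    (TensorProduct.map ΔH LinearMap.id) (ΔH 1)
      = ∑ m : Bool, ∑ u : Bool, ∑ w : Bool, ∑ n : Bool,
          (Pi.single (m, u) 1 ⊗ₜ[ℂ] Pi.single (u, w) 1) ⊗ₜ[ℂ]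
            (Pi.single (w, n) (1 : A (w, n))) := by
  have h1 : ΔH 1 = ∑ i : Bool, ∑ j : Bool, ∑ k : Bool,
      (Pi.single (i, k) (1 : A (i,k)) ⊗ₜ[ℂ] Pi.single (k, j) (1 : A (k,j))) := by
    rw [hΔH]
    simp only [LinearMap.sum_apply, LinearMap.comp_apply, LinearMap.proj_apply, Pi.one_apply,
      AlgHom.toLinearMap_apply, map_one, Algebra.TensorProduct.one_def, TensorProduct.map_tmul,
      LinearMap.single_apply]
  have h2 : ∀ a b : Bool, ΔH (Pi.single (a, b) 1) = ∑ k : Bool,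
      (Pi.single (a, k) (1 : A (a,k)) ⊗ₜ[ℂ] Pi.single (k, b) (1 : A (k,b))) := by
    rw [hΔH]
    intro a b
    cases a <;> cases b <;>
      simp [LinearMap.sum_apply, Fintype.sum_bool, Pi.single_eq_same,
        Pi.single_eq_of_ne, Algebra.TensorProduct.one_def]
  have h3 : (TensorProduct.map ΔH LinearMap.id) (ΔH 1)
      = ∑ m : Bool, ∑ u : Bool, ∑ w : Bool, ∑ n : Bool,
          (Pi.single (m, u) 1 ⊗ₜ[ℂ] Pi.single (u, w) 1) ⊗ₜ[ℂ]
            (Pi.single (w, n) (1 : A (w, n))) := by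
    rw [h1]
    simp only [map_sum, TensorProduct.map_tmul, LinearMap.id_coe, id_eq, h2,
      TensorProduct.sum_tmul]
    simp only [Fintype.sum_bool]
    abel
  refine ⟨?_, h3⟩
  rw [h3, h1]
  simp only [Fintype.sum_bool, TensorProduct.add_tmul, TensorProduct.tmul_add, map_add,
    TensorProduct.assoc_symm_tmul]
  have dl : ∀ x y z : (((p : Bool × Bool) → A p) ⊗[ℂ] ((p : Bool × Bool) → A p)) ⊗[ℂ]
      ((p : Bool × Bool) → A p), x * (y + z) = x * y + x * z :=
    fun x y z => Distrib.left_distrib x y z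
  have dr : ∀ x y z : (((p : Bool × Bool) → A p) ⊗[ℂ] ((p : Bool × Bool) → A p)) ⊗[ℂ]
      ((p : Bool × Bool) → A p), (x + y) * z = x * z + y * z :=
    fun x y z => Distrib.right_distrib x y z
  simp only [dl, dr, Algebra.TensorProduct.tmul_mul_tmul, one_mul, mul_one,
    single_one_mul_single_one, Prod.mk.injEq]
  have h0a : ∀ x : ((p : Bool × Bool) → A p),
      x ⊗ₜ[ℂ] (0 : (p : Bool × Bool) → A p) = (0 : ((p : Bool × Bool) → A p) ⊗[ℂ] ((p : Bool × Bool) → A p)) :=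
    fun x => TensorProduct.tmul_zero _ x
  have h0b : ∀ y : ((p : Bool × Bool) → A p),
      ((0 : ((p : Bool × Bool) → A p) ⊗[ℂ] ((p : Bool × Bool) → A p)) ⊗ₜ[ℂ] y)
        = (0 : (((p : Bool × Bool) → A p) ⊗[ℂ] ((p : Bool × Bool) → A p)) ⊗[ℂ] ((p : Bool × Bool) → A p)) :=
    fun y => TensorProduct.zero_tmul _ y
  have az : ∀ x : (((p : Bool × Bool) → A p) ⊗[ℂ] ((p : Bool × Bool) → A p)) ⊗[ℂ] ((p : Bool × Bool) → A p),
      x + 0 = x := fun x => add_zero x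
  have za : ∀ x : (((p : Bool × Bool) → A p) ⊗[ℂ] ((p : Bool × Bool) → A p)) ⊗[ℂ] ((p : Bool × Bool) → A p),
      0 + x = x := fun x => zero_add x
  simp only [reduceCtorEq, and_true, true_and, and_false, false_and, if_true, if_false, reduceIte, h0a, h0b, az, za]
  abel
end
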